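/- For a weak almost S-structure (f, Q, ξ_i, η^i, g), the tensors N^(2)_i and N^(4)_{ij} vanish for all i, j; moreover, for each i, the tensor N^(3)_i vanishes if and only if ξ_i is a Killing vector field. -/

import Mathlib

/-!
An algebraic model of the calculus of smooth vector fields on a smooth manifold
`M^{2n+p}`: `F` plays the role of the ordered commutative `ℝ`-algebra `C^∞(M)` of
smooth real-valued functions, and `V` the `F`-module `𝔛(M)` of smooth vector fields,
equipped with the derivation action `D` of vector fields on functions, the Lie
bracket of vector fields, a Riemannian metric `g` (a symmetric, `F`-bilinear,
positive-definite form) and its Levi-Civita connection `nabla` (the unique metric,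
torsion-free affine connection of `g`).
-/

noncomputable section

structure RiemannCalculus (F V : Type*) [CommRing F] [PartialOrder F] [IsOrderedRing F] [Algebra ℝ F]
    [AddCommGroup V] [Module F V] where
  /-- the derivation action `X φ` of a vector field `X` on a function `φ` -/
  D : V → F → F
  D_add_left : ∀ X Y φ, D (X + Y) φ = D X φ + D Y φ
  D_smul_left : ∀ (ψ : F) (X : V) (φ : F), D (ψ • X) φ = ψ * D X φ
  D_add_right : ∀ (X : V) (φ ψ : F), D X (φ + ψ) = D X φ + D X ψ
  D_mul_right : ∀ (X : V) (φ ψ : F), D X (φ * ψ) = φ * D X ψ + ψ * D X φ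
  D_algebraMap : ∀ (X : V) (r : ℝ), D X (algebraMap ℝ F r) = 0
  /-- the Lie bracket `[X, Y]` of vector fields -/
  bracket : V → V → V
  bracket_add_left : ∀ X Y Z, bracket (X + Y) Z = bracket X Z + bracket Y Z
  bracket_antisymm : ∀ X Y, bracket X Y = -bracket Y X
  bracket_leibniz : ∀ (X : V) (φ : F) (Y : V),
    bracket X (φ • Y) = φ • bracket X Y + D X φ • Y
  bracket_jacobi : ∀ X Y Z,
    bracket X (bracket Y Z) = bracket (bracket X Y) Z + bracket Y (bracket X Z)
  D_bracket : ∀ X Y φ, D (bracket X Y) φ = D X (D Y φ) - D Y (D X φ)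
  /-- the Riemannian metric `g` -/
  g : V → V → F
  g_symm : ∀ X Y, g X Y = g Y X
  g_add_left : ∀ X Y Z, g (X + Y) Z = g X Z + g Y Z
  g_smul_left : ∀ (φ : F) (X Y : V), g (φ • X) Y = φ * g X Y
  g_nonneg : ∀ X, 0 ≤ g X X
  g_definite : ∀ X, g X X = 0 → X = 0
  /-- the Levi-Civita connection `∇` of `g` -/
  nabla : V → V → V
  nabla_add_left : ∀ X Y Z, nabla (X + Y) Z = nabla X Z + nabla Y Z
  nabla_smul_left : ∀ (φ : F) (X Y : V), nabla (φ • X) Y = φ • nabla X Y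
  nabla_add_right : ∀ X Y Z, nabla X (Y + Z) = nabla X Y + nabla X Z
  nabla_leibniz : ∀ (X : V) (φ : F) (Y : V),
    nabla X (φ • Y) = φ • nabla X Y + D X φ • Y
  nabla_metric : ∀ X Y Z, D X (g Y Z) = g (nabla X Y) Z + g Y (nabla X Z)
  nabla_torsion_free : ∀ X Y, nabla X Y - nabla Y X = bracket X Y

/-- A metric weak `f`-structure `(f, Q, ξ_i, η^i, g)` on a smooth manifold `M^{2n+p}`
(Rovenski–Wolak): `f` is a `(1,1)`-tensor field of rank `2n`, `Q` a nonsingular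
`(1,1)`-tensor field, `ξ_1, …, ξ_p` vector fields spanning `ker f`, and `η^1, …, η^p`
the dual `1`-forms, satisfying `f³ + f∘Q = 0`, `Q ξᵢ = ξᵢ`,
`f² = -Q + Σᵢ ηⁱ ⊗ ξᵢ`, `ηⁱ(ξⱼ) = δⁱⱼ`, together with a compatible Riemannian
metric: `g(fX, fY) = g(X, QY) - Σᵢ ηⁱ(X) ηⁱ(QY)`. -/
structure MetricWeakFStructure (p : ℕ) (F V : Type*) [CommRing F] [PartialOrder F] [IsOrderedRing F] [Algebra ℝ F]
    [AddCommGroup V] [Module F V] extends RiemannCalculus F V where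
  f : V →ₗ[F] V
  Q : V →ₗ[F] V
  ξ : Fin p → V
  η : Fin p → V →ₗ[F] F
  Q_nonsingular : Function.Bijective Q
  f_cubed : ∀ X, f (f (f X)) + f (Q X) = 0
  Q_xi : ∀ i, Q (ξ i) = ξ i
  f_squared : ∀ X, f (f X) = -Q X + ∑ i, η i X • ξ i
  eta_xi : ∀ i j, η i (ξ j) = if i = j then (1 : F) else 0
  /-- the `ηⁱ` are the coframe dual to the `ξᵢ` w.r.t. the splitting
  `TM = f(TM) ⊕ ker f` (equivalently, `ηⁱ ∘ f = 0`). -/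
  eta_Q : ∀ i X, η i (Q X) = η i X
  /-- the `ξᵢ` span `ker f` -/
  ker_f_spanned : ∀ X, f X = 0 → X ∈ Submodule.span F (Set.range ξ)
  compatible : ∀ X Y, g (f X) (f Y) = g X (Q Y) - ∑ i, η i X * η i (Q Y)

namespace MetricWeakFStructure

variable {p : ℕ} {F V : Type*} [CommRing F] [PartialOrder F] [IsOrderedRing F] [Algebra ℝ F]
  [AddCommGroup V] [Module F V] (S : MetricWeakFStructure p F V)

/-- the fundamental 2-form `Φ(X,Y) = g(X, fY)` -/
def Phi (X Y : V) : F := S.g X (S.f Y)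

/-- `dηⁱ(X,Y) = (1/2){X(ηⁱ(Y)) - Y(ηⁱ(X)) - ηⁱ([X,Y])}` -/
def dEta (i : Fin p) (X Y : V) : F :=
  algebraMap ℝ F (1 / 2) *
    (S.D X (S.η i Y) - S.D Y (S.η i X) - S.η i (S.bracket X Y))

/-- `dΦ(X,Y,Z) = (1/3){XΦ(Y,Z) + YΦ(Z,X) + ZΦ(X,Y) - Φ([X,Y],Z) - Φ([Z,X],Y) - Φ([Y,Z],X)}` -/
def dPhi (X Y Z : V) : F :=
  algebraMap ℝ F (1 / 3) *
    (S.D X (S.Phi Y Z) + S.D Y (S.Phi Z X) + S.D Z (S.Phi X Y)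
      - S.Phi (S.bracket X Y) Z - S.Phi (S.bracket Z X) Y - S.Phi (S.bracket Y Z) X)

/-- the Nijenhuis torsion `[f,f](X,Y) = f²[X,Y] + [fX,fY] - f[fX,Y] - f[X,fY]` -/
def nijenhuis (X Y : V) : V :=
  S.f (S.f (S.bracket X Y)) + S.bracket (S.f X) (S.f Y)
    - S.f (S.bracket (S.f X) Y) - S.f (S.bracket X (S.f Y))

/-- `N⁽¹⁾ = [f,f] + 2 Σᵢ dηⁱ ⊗ ξᵢ` -/
def N1 (X Y : V) : V := S.nijenhuis X Y + ∑ i, (2 * S.dEta i X Y) • S.ξ i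

/-- the Lie derivative of `f`: `(£_Z f)X = [Z, fX] - f[Z,X]` -/
def lieD_f (Z X : V) : V := S.bracket Z (S.f X) - S.f (S.bracket Z X)

/-- the Lie derivative of `ηʲ`: `(£_Z ηʲ)X = Z(ηʲ(X)) - ηʲ([Z,X])` -/
def lieD_eta (j : Fin p) (Z X : V) : F := S.D Z (S.η j X) - S.η j (S.bracket Z X)

/-- the Lie derivative of `g`: `(£_Z g)(X,Y) = Z(g(X,Y)) - g([Z,X],Y) - g(X,[Z,Y])` -/
def lieD_g (Z X Y : V) : F :=
  S.D Z (S.g X Y) - S.g (S.bracket Z X) Y - S.g X (S.bracket Z Y)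

/-- `N⁽²⁾ᵢ(X,Y) = (£_{fX} ηⁱ)Y - (£_{fY} ηⁱ)X` -/
def N2 (i : Fin p) (X Y : V) : F := S.lieD_eta i (S.f X) Y - S.lieD_eta i (S.f Y) X

/-- `N⁽³⁾ᵢ = £_{ξᵢ} f` -/
def N3 (i : Fin p) (X : V) : V := S.lieD_f (S.ξ i) X

/-- `N⁽⁴⁾ᵢⱼ = £_{ξᵢ} ηʲ` -/
def N4 (i j : Fin p) (X : V) : F := S.lieD_eta j (S.ξ i) X

/-- `Q̃ = Q - id` -/
def Qt (X : V) : V := S.Q X - X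

/-- `X^⊤ = X - Σᵢ ηⁱ(X) ξᵢ`, the `f(TM)`-component of `X` -/
def top (X : V) : V := X - ∑ i, S.η i X • S.ξ i

/-- `N⁽⁵⁾(X,Y,Z) = (fZ)(g(X^⊤,Q̃Y)) - (fY)(g(X^⊤,Q̃Z)) + g([X,fZ]^⊤,Q̃Y)
  - g([X,fY]^⊤,Q̃Z) + g([Y,fZ]^⊤ - [Z,fY]^⊤ - f[Y,Z], Q̃X)` -/
def N5 (X Y Z : V) : F :=
  S.D (S.f Z) (S.g (S.top X) (S.Qt Y)) - S.D (S.f Y) (S.g (S.top X) (S.Qt Z))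
    + S.g (S.top (S.bracket X (S.f Z))) (S.Qt Y)
    - S.g (S.top (S.bracket X (S.f Y))) (S.Qt Z)
    + S.g (S.top (S.bracket Y (S.f Z)) - S.top (S.bracket Z (S.f Y))
        - S.f (S.bracket Y Z)) (S.Qt X)

/-- the covariant derivative of `f`: `(∇_X f)Y = ∇_X(fY) - f(∇_X Y)` -/
def nablaF (X Y : V) : V := S.nabla X (S.f Y) - S.f (S.nabla X Y)

/-- `hᵢ = (1/2) £_{ξᵢ} f` -/
def hT (i : Fin p) (X : V) : V := algebraMap ℝ F (1 / 2) • S.N3 i X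

/-- a vector field `Z` is Killing if `£_Z g = 0` -/
def IsKilling (Z : V) : Prop := ∀ X Y : V, S.lieD_g Z X Y = 0

/-- the structure is normal if `N⁽¹⁾ = 0` -/
def Normal : Prop := ∀ X Y : V, S.N1 X Y = 0

/-- a weak K-structure: normal with `dΦ = 0` -/
def WeakK : Prop := S.Normal ∧ ∀ X Y Z : V, S.dPhi X Y Z = 0

/-- a weak almost S-structure: `dηⁱ = Φ` for all `i` -/
def WeakAlmostS : Prop := ∀ (i : Fin p) (X Y : V), S.dEta i X Y = S.Phi X Y

/-- a weak S-structure: a weak K-structure with `dηⁱ = Φ` for all `i` -/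
def WeakS : Prop := S.WeakK ∧ S.WeakAlmostS

/-- a weak almost C-structure: `dΦ = 0` and `dηⁱ = 0` for all `i` -/
def WeakAlmostC : Prop :=
  (∀ X Y Z : V, S.dPhi X Y Z = 0) ∧ ∀ (i : Fin p) (X Y : V), S.dEta i X Y = 0

/-- a weak C-structure: a weak K-structure with `dηⁱ = 0` for all `i` -/
def WeakC : Prop := S.WeakK ∧ ∀ (i : Fin p) (X Y : V), S.dEta i X Y = 0

end MetricWeakFStructure

open MetricWeakFStructure

namespace MetricWeakFStructure

section Aux
variable {p : ℕ} {F V : Type*} [CommRing F] [PartialOrder F] [IsOrderedRing F] [Algebra ℝ F]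
  [AddCommGroup V] [Module F V] (S : MetricWeakFStructure p F V)

lemma D_zero (X : V) : S.D X (0 : F) = 0 := by
  simpa using S.D_algebraMap X 0

lemma D_one (X : V) : S.D X (1 : F) = 0 := by
  simpa using S.D_algebraMap X 1

lemma D_sub_right (X : V) (φ ψ : F) : S.D X (φ - ψ) = S.D X φ - S.D X ψ := by
  have h := S.D_add_right X (φ - ψ) ψ
  rw [sub_add_cancel] at h
  exact eq_sub_of_add_eq h.symm

lemma D_const_mul (X : V) (r : ℝ) (φ : F) :
    S.D X (algebraMap ℝ F r * φ) = algebraMap ℝ F r * S.D X φ := by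
  rw [S.D_mul_right, S.D_algebraMap, mul_zero, add_zero]

lemma half_cancel {t : F} (_ : S.WeakAlmostS) (h : algebraMap ℝ F (1 / 2) * t = 0) : t = 0 := by
  have h2 : (2 : F) * algebraMap ℝ F (1 / 2) = 1 := by
    rw [(map_ofNat (algebraMap ℝ F) 2).symm, ← map_mul]
    norm_num
  calc t = ((2 : F) * algebraMap ℝ F (1 / 2)) * t := by rw [h2, one_mul]
    _ = 2 * (algebraMap ℝ F (1 / 2) * t) := by ring
    _ = 0 := by rw [h, mul_zero]

lemma g_smul_right (φ : F) (X Y : V) : S.g X (φ • Y) = φ * S.g X Y := by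
  rw [S.g_symm, S.g_smul_left, S.g_symm]

lemma g_add_right (X Y Z : V) : S.g X (Y + Z) = S.g X Y + S.g X Z := by
  rw [S.g_symm, S.g_add_left, S.g_symm Y X, S.g_symm Z X]

/-- `g X ·` as a linear map. -/
def gR (X : V) : V →ₗ[F] F where
  toFun Y := S.g X Y
  map_add' := S.g_add_right X
  map_smul' φ Y := by simpa using S.g_smul_right φ X Y

lemma g_zero_right (X : V) : S.g X 0 = 0 := map_zero (S.gR X)

lemma g_zero_left (X : V) : S.g 0 X = 0 := by rw [S.g_symm]; exact S.g_zero_right X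

lemma g_sub_right (X Y Z : V) : S.g X (Y - Z) = S.g X Y - S.g X Z :=
  map_sub (S.gR X) Y Z

lemma bracket_add_right (X Y Z : V) :
    S.bracket X (Y + Z) = S.bracket X Y + S.bracket X Z := by
  rw [S.bracket_antisymm X (Y + Z), S.bracket_add_left, neg_add,
    ← S.bracket_antisymm X Y, ← S.bracket_antisymm X Z]

lemma bracket_zero_right (X : V) : S.bracket X 0 = 0 := by
  have h := S.bracket_leibniz X 0 0
  simpa [S.D_zero] using h

lemma f_xi (i : Fin p) : S.f (S.ξ i) = 0 := by
  have h2 : S.f (S.f (S.ξ i)) = 0 := by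
    rw [S.f_squared, S.Q_xi]
    have hs : ∑ j, S.η j (S.ξ i) • S.ξ j = S.ξ i := by
      simp [S.eta_xi, ite_smul]
    rw [hs, neg_add_cancel]
  have h3 := S.f_cubed (S.ξ i)
  rw [S.Q_xi, h2, map_zero, zero_add] at h3
  exact h3

lemma g_xi (i : Fin p) (Z : V) : S.g (S.ξ i) Z = S.η i Z := by
  obtain ⟨Y, rfl⟩ := S.Q_nonsingular.2 Z
  have h := S.compatible (S.ξ i) Y
  rw [S.f_xi, S.g_zero_left] at h
  have hsum : ∑ j, S.η j (S.ξ i) * S.η j (S.Q Y) = S.η i (S.Q Y) := by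
    simp [S.eta_xi, ite_mul]
  rw [hsum] at h
  exact (sub_eq_zero.mp h.symm)

lemma dEta_antisymm (i : Fin p) (X Y : V) : S.dEta i X Y = - S.dEta i Y X := by
  unfold dEta
  rw [S.bracket_antisymm Y X, map_neg]
  ring

lemma g_f_antisymm (hS : S.WeakAlmostS) (i : Fin p) (X Y : V) :
    S.g X (S.f Y) = - S.g Y (S.f X) := by
  have h1 := hS i X Y
  have h2 := hS i Y X
  unfold Phi at h1 h2
  rw [← h1, ← h2]
  exact S.dEta_antisymm i X Y

lemma eta_f (hS : S.WeakAlmostS) (i : Fin p) (X : V) : S.η i (S.f X) = 0 := by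
  rw [← S.g_xi, S.g_f_antisymm hS i, S.f_xi, S.g_zero_right, neg_zero]

lemma N4_zero (hS : S.WeakAlmostS) (i j : Fin p) (X : V) : S.N4 i j X = 0 := by
  apply S.half_cancel hS
  have hd := hS j (S.ξ i) X
  unfold dEta at hd
  have hc : S.D X (S.η j (S.ξ i)) = 0 := by
    rw [S.eta_xi]
    rcases eq_or_ne j i with h | h
    · simp only [if_pos h]; exact S.D_one X
    · simp only [if_neg h]; exact S.D_zero X
  rw [hc, sub_zero] at hd
  unfold N4 lieD_eta
  rw [hd]
  unfold Phi
  rw [S.g_xi]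
  exact S.eta_f hS i X

lemma N2_zero (hS : S.WeakAlmostS) (i : Fin p) (X Y : V) : S.N2 i X Y = 0 := by
  apply S.half_cancel hS
  have h1 := hS i (S.f X) Y
  have h2 := hS i (S.f Y) X
  unfold dEta Phi at h1 h2
  rw [S.eta_f hS i X, S.D_zero, sub_zero] at h1
  rw [S.eta_f hS i Y, S.D_zero, sub_zero] at h2
  unfold N2 lieD_eta
  rw [mul_sub, h1, h2, S.g_symm]
  exact sub_self _

lemma D_xi_eta (hS : S.WeakAlmostS) (i j : Fin p) (Z : V) :
    S.D (S.ξ i) (S.η j Z) = S.η j (S.bracket (S.ξ i) Z) := by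
  have h := S.N4_zero hS i j Z
  unfold N4 lieD_eta at h
  exact sub_eq_zero.mp h

lemma lie_dEta_zero (hS : S.WeakAlmostS) (i : Fin p) (X Y : V) :
    S.D (S.ξ i) (S.dEta i X Y) =
      S.dEta i (S.bracket (S.ξ i) X) Y + S.dEta i X (S.bracket (S.ξ i) Y) := by
  unfold dEta
  rw [S.D_const_mul, ← mul_add]
  congr 1
  simp only [S.D_sub_right, S.D_bracket, S.D_xi_eta hS i i]
  rw [S.bracket_jacobi, map_add]
  ring

lemma lie_Phi_zero (hS : S.WeakAlmostS) (i : Fin p) (X Y : V) :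
    S.D (S.ξ i) (S.Phi X Y) =
      S.Phi (S.bracket (S.ξ i) X) Y + S.Phi X (S.bracket (S.ξ i) Y) := by
  simp only [← hS i]
  exact S.lie_dEta_zero hS i X Y

lemma lieg_f (hS : S.WeakAlmostS) (i : Fin p) (X Y : V) :
    S.lieD_g (S.ξ i) X (S.f Y) = - S.g X (S.N3 i Y) := by
  have h := S.lie_Phi_zero hS i X Y
  unfold Phi at h
  unfold lieD_g N3 lieD_f
  rw [h, S.g_sub_right]
  ring

lemma N3_of_killing (hS : S.WeakAlmostS) (i : Fin p)
    (hK : S.IsKilling (S.ξ i)) (X : V) : S.N3 i X = 0 := by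
  have h : ∀ Z : V, S.g Z (S.N3 i X) = 0 := by
    intro Z
    have h1 := S.lieg_f hS i Z X
    rw [hK Z (S.f X)] at h1
    exact neg_eq_zero.mp h1.symm
  exact S.g_definite _ (h _)

/-- `X ↦ X - ∑ ηᵏ(X) ξₖ` as a linear map. -/
def projT : V →ₗ[F] V := LinearMap.id - ∑ k, (S.η k).smulRight (S.ξ k)

lemma mem_span_eq (Z : V) (hZ : Z ∈ Submodule.span F (Set.range S.ξ)) :
    Z = ∑ k, S.η k Z • S.ξ k := by
  have hsub : Submodule.span F (Set.range S.ξ) ≤ LinearMap.ker S.projT := by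
    rw [Submodule.span_le]
    rintro _ ⟨j, rfl⟩
    simp only [SetLike.mem_coe, LinearMap.mem_ker, projT, LinearMap.sub_apply,
      LinearMap.id_apply, LinearMap.sum_apply, LinearMap.smulRight_apply,
      S.eta_xi, ite_smul, one_smul, zero_smul]
    simp
  have h := hsub hZ
  rw [LinearMap.mem_ker] at h
  simp only [projT, LinearMap.sub_apply, LinearMap.id_apply, LinearMap.sum_apply,
    LinearMap.smulRight_apply] at h
  exact sub_eq_zero.mp h

lemma bracket_xi_eta (hS : S.WeakAlmostS) (i j k : Fin p) :
    S.η k (S.bracket (S.ξ i) (S.ξ j)) = 0 := by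
  have h := S.D_xi_eta hS i k (S.ξ j)
  rw [S.eta_xi] at h
  rcases eq_or_ne k j with hkj | hkj
  · rw [if_pos hkj] at h
    rw [← h]
    exact S.D_one _
  · rw [if_neg hkj] at h
    rw [← h]
    exact S.D_zero _

lemma bracket_xi (hS : S.WeakAlmostS) (i j : Fin p) (hN : ∀ X : V, S.N3 i X = 0) :
    S.bracket (S.ξ i) (S.ξ j) = 0 := by
  have hf : S.f (S.bracket (S.ξ i) (S.ξ j)) = 0 := by
    have h := hN (S.ξ j)
    unfold N3 lieD_f at h
    rw [S.f_xi, S.bracket_zero_right, zero_sub, neg_eq_zero] at h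
    exact h
  have hmem := S.ker_f_spanned _ hf
  have hexp := S.mem_span_eq _ hmem
  rw [hexp]
  simp [S.bracket_xi_eta hS i j]

lemma lieD_g_add (Z X A B : V) :
    S.lieD_g Z X (A + B) = S.lieD_g Z X A + S.lieD_g Z X B := by
  unfold lieD_g
  rw [S.g_add_right, S.D_add_right, S.g_add_right, S.bracket_add_right, S.g_add_right]
  ring

lemma lieD_g_smul (Z X : V) (φ : F) (A : V) :
    S.lieD_g Z X (φ • A) = φ * S.lieD_g Z X A := by
  unfold lieD_g
  rw [S.g_smul_right, S.D_mul_right, S.g_smul_right, S.bracket_leibniz,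
    S.g_add_right, S.g_smul_right, S.g_smul_right]
  ring

/-- `lieD_g Z X ·` as a linear map. -/
def lieD_g_lin (Z X : V) : V →ₗ[F] F where
  toFun := S.lieD_g Z X
  map_add' := S.lieD_g_add Z X
  map_smul' φ A := by simpa using S.lieD_g_smul Z X φ A

lemma lieD_g_sum {ι : Type*} (Z X : V) (s : Finset ι) (c : ι → F) (v : ι → V) :
    S.lieD_g Z X (∑ j ∈ s, c j • v j) = ∑ j ∈ s, c j * S.lieD_g Z X (v j) := by
  have h := map_sum (S.lieD_g_lin Z X) (fun j => c j • v j) s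
  simp only [lieD_g_lin, LinearMap.coe_mk, AddHom.coe_mk] at h
  rw [h]
  exact Finset.sum_congr rfl fun j _ => S.lieD_g_smul Z X (c j) (v j)

lemma killing_of_N3 (hS : S.WeakAlmostS) (i : Fin p)
    (hN : ∀ X : V, S.N3 i X = 0) : S.IsKilling (S.ξ i) := by
  intro X Y
  obtain ⟨U, hU⟩ := S.Q_nonsingular.2 (-(S.top Y))
  have htop : ∀ k, S.η k (S.top Y) = 0 := by
    intro k
    unfold top
    rw [map_sub, map_sum]
    simp [S.eta_xi, mul_ite, Finset.sum_ite_eq]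
  have hηU : ∀ k, S.η k U = 0 := by
    intro k
    rw [← S.eta_Q k U, hU, map_neg, htop k, neg_zero]
  have hffU : S.f (S.f U) = S.top Y := by
    rw [S.f_squared, hU, neg_neg]
    simp [hηU]
  have hYdecomp : Y = S.f (S.f U) + ∑ j, S.η j Y • S.ξ j := by
    rw [hffU]
    unfold top
    abel
  have hxi : ∀ j, S.lieD_g (S.ξ i) X (S.ξ j) = 0 := by
    intro j
    unfold lieD_g
    have e1 : S.g X (S.ξ j) = S.η j X := by rw [S.g_symm]; exact S.g_xi j X
    have e2 : S.g (S.bracket (S.ξ i) X) (S.ξ j) = S.η j (S.bracket (S.ξ i) X) := by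
      rw [S.g_symm]; exact S.g_xi j _
    rw [e1, e2, S.bracket_xi hS i j hN, S.g_zero_right, S.D_xi_eta hS i j X]
    ring
  have h1 : S.lieD_g (S.ξ i) X (S.f (S.f U)) = 0 := by
    rw [S.lieg_f hS i X (S.f U), hN, S.g_zero_right, neg_zero]
  rw [hYdecomp, S.lieD_g_add, h1, zero_add, S.lieD_g_sum]
  simp only [hxi, mul_zero, Finset.sum_const_zero]

end Aux

end MetricWeakFStructure

/-- For a weak almost S-structure, the tensors `N⁽²⁾ᵢ` and `N⁽⁴⁾ᵢⱼ`
vanish; moreover, for each `i`, `N⁽³⁾ᵢ` vanishes if and only if `ξᵢ` is a Killing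
vector field. -/
theorem statement_4 {p : ℕ} {F V : Type*} [CommRing F] [PartialOrder F] [IsOrderedRing F] [Algebra ℝ F]
    [AddCommGroup V] [Module F V] (S : MetricWeakFStructure p F V)
    (hS : S.WeakAlmostS) :
    (∀ (i : Fin p) (X Y : V), S.N2 i X Y = 0) ∧
    (∀ (i j : Fin p) (X : V), S.N4 i j X = 0) ∧
    (∀ i : Fin p, (∀ X : V, S.N3 i X = 0) ↔ S.IsKilling (S.ξ i)) := by
  refine ⟨S.N2_zero hS, S.N4_zero hS, fun i => ⟨S.killing_of_N3 hS i, S.N3_of_killing hS i⟩⟩
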